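/- arXiv:2012.04713 — 4 statements merged into one kernel-verified Lean document; each statement's English description precedes it below -/
import Mathlib

section
/- Let a : Equiv.Perm X be such that P a * C = C * P a and P a * B = B * P a. Then for every depth p : ℕ, all parameters β γ : Fin p → ℝ, and every x : X, the depth-p QAOA state ψ satisfies ψ (a x) = ψ x, and hence the measurement probabilities satisfy Pr(x) = Pr(a x). -/
/-- Permutation matrix of a permutation `a` of a finite type `X`:
`(P a) x y = 1` if `x = a y` and `0` otherwise. -/
noncomputable def permMatrix {X : Type*} [Fintype X] [DecidableEq X] (a : Equiv.Perm X) :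
    Matrix X X ℂ :=
  Matrix.of fun x y => if x = a y then 1 else 0

/-- The transverse-field mixing Hamiltonian `B = ∑_j X_j` in the computational basis:
`B x y = 1` if the bitstrings `x` and `y` differ in exactly one coordinate, else `0`. -/
noncomputable def mixerB (n : ℕ) : Matrix (Fin n → Bool) (Fin n → Bool) ℂ :=
  Matrix.of fun x y => if (Finset.univ.filter fun i => x i ≠ y i).card = 1 then 1 else 0

/-- The diagonal objective Hamiltonian `C` of an objective function `f`. -/
noncomputable def objC (n : ℕ) (f : (Fin n → Bool) → ℝ) :
    Matrix (Fin n → Bool) (Fin n → Bool) ℂ :=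
  Matrix.diagonal fun x => (f x : ℂ)

/-- The uniform superposition initial state. -/
noncomputable def uniformState (n : ℕ) : (Fin n → Bool) → ℂ :=
  fun _ => ((1 / Real.sqrt (2 ^ n) : ℝ) : ℂ)

/-- The depth-`p` QAOA state with parameters `β γ : Fin p → ℝ`: the layers
`exp (-i γ_j C)` then `exp (-i β_j B)` are applied to the uniform initial state
in order `j = 1, …, p`. -/
noncomputable def qaoaState (n : ℕ) (f : (Fin n → Bool) → ℝ) (p : ℕ) (β γ : Fin p → ℝ) :
    (Fin n → Bool) → ℂ :=
  (((List.finRange p).map fun j =>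
      NormedSpace.exp ((-(β j : ℂ) * Complex.I) • mixerB n) *
        NormedSpace.exp ((-(γ j : ℂ) * Complex.I) • objC n f)).reverse.prod).mulVec
    (uniformState n)

/-!
If `P a` commutes with `B` and `C`, it commutes with every `exp (t • B)` and `exp (t • C)`,
hence with the whole QAOA circuit `U`. Since `P a` fixes the uniform state `s`, it fixes
`ψ = U s` as well, and `P a ψ = ψ` says exactly that `ψ` is constant on the orbits of `a`.
-/

open Matrix

section Permutation

variable {X : Type*} [Fintype X] [DecidableEq X]

theorem permMatrix_mulVec_apply (a : Equiv.Perm X) (v : X → ℂ) (x : X) :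
    (permMatrix a *ᵥ v) x = v (a⁻¹ x) := by
  have hx : ∀ y : X, x = a y ↔ y = a⁻¹ x := fun y => by
    rw [eq_comm, ← Equiv.Perm.eq_inv_iff_eq]
  simp only [permMatrix, mulVec, dotProduct, of_apply, ite_mul, one_mul, zero_mul, hx,
    Finset.sum_ite_eq', Finset.mem_univ, if_true]

theorem permMatrix_mulVec_eq_self_iff (a : Equiv.Perm X) (v : X → ℂ) :
    permMatrix a *ᵥ v = v ↔ ∀ x, v (a x) = v x := by
  simp only [funext_iff, permMatrix_mulVec_apply]
  constructor
  · intro h x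
    simpa using (h (a x)).symm
  · intro h x
    simpa using (h (a⁻¹ x)).symm

end Permutation

noncomputable def qaoaUnitary (n : ℕ) (f : (Fin n → Bool) → ℝ) (p : ℕ) (β γ : Fin p → ℝ) :
    Matrix (Fin n → Bool) (Fin n → Bool) ℂ :=
  ((List.finRange p).map fun j =>
      NormedSpace.exp ((-(β j : ℂ) * Complex.I) • mixerB n) *
        NormedSpace.exp ((-(γ j : ℂ) * Complex.I) • objC n f)).reverse.prod

theorem qaoaState_eq_qaoaUnitary_mulVec (n : ℕ) (f : (Fin n → Bool) → ℝ) (p : ℕ)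
    (β γ : Fin p → ℝ) : qaoaState n f p β γ = qaoaUnitary n f p β γ *ᵥ uniformState n :=
  rfl

theorem Commute.qaoaUnitary {n : ℕ} {f : (Fin n → Bool) → ℝ}
    {M : Matrix (Fin n → Bool) (Fin n → Bool) ℂ} (hB : Commute M (mixerB n))
    (hC : Commute M (objC n f)) (p : ℕ) (β γ : Fin p → ℝ) :
    Commute M (qaoaUnitary n f p β γ) := by
  refine Commute.list_prod_right _ _ fun U hU => ?_
  obtain ⟨j, -, rfl⟩ := List.mem_map.1 (List.mem_reverse.1 hU)
  exact ((hB.smul_right _).exp_right).mul_right ((hC.smul_right _).exp_right)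

theorem permMatrix_mulVec_uniformState {n : ℕ} (a : Equiv.Perm (Fin n → Bool)) :
    permMatrix a *ᵥ uniformState n = uniformState n :=
  (permMatrix_mulVec_eq_self_iff a _).2 fun _ => rfl

/-- Theorem 1 (first case): if the permutation matrix of `a` commutes with both the
objective Hamiltonian `C` and the mixer `B`, then for every depth `p`, all parameters,
and every bitstring `x`, the QAOA amplitudes satisfy `ψ (a x) = ψ x`, and hence the
measurement probabilities satisfy `Pr x = Pr (a x)`. -/
theorem qaoa_symmetry (n : ℕ) (f : (Fin n → Bool) → ℝ) (a : Equiv.Perm (Fin n → Bool))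
    (hC : permMatrix a * objC n f = objC n f * permMatrix a)
    (hB : permMatrix a * mixerB n = mixerB n * permMatrix a) :
    ∀ (p : ℕ) (β γ : Fin p → ℝ) (x : Fin n → Bool),
      qaoaState n f p β γ (a x) = qaoaState n f p β γ x ∧
      ‖qaoaState n f p β γ x‖ ^ 2 = ‖qaoaState n f p β γ (a x)‖ ^ 2 := by
  intro p β γ x
  have hU : Commute (permMatrix a) (qaoaUnitary n f p β γ) := Commute.qaoaUnitary hB hC p β γ
  have hfix : permMatrix a *ᵥ qaoaState n f p β γ = qaoaState n f p β γ := by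
    rw [qaoaState_eq_qaoaUnitary_mulVec, mulVec_mulVec, hU.eq, ← mulVec_mulVec,
      permMatrix_mulVec_uniformState]
  have hx := (permMatrix_mulVec_eq_self_iff a _).1 hfix x
  exact ⟨hx, by rw [hx]⟩
end

section
/- Let S be a set of permutations of X such that for every a ∈ S, the permutation matrix P a commutes with both C and B. Then for every element a of the subgroup Subgroup.closure S of Equiv.Perm X generated by S, every depth p : ℕ, all parameters β γ : Fin p → ℝ, and every x : X, the QAOA measurement probabilities satisfy Pr(x) = Pr(a x); that is, probabilities are the same across all bitstrings in each orbit of the generated symmetry group. -/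
/-!
`a ↦ P a` is a group homomorphism into the invertible matrices, so the permutations whose matrix
commutes with a fixed matrix form a subgroup; hence every `a` in the closure of `S` commutes with
`B` and `C`, and therefore with every layer `exp (-i β B) exp (-i γ C)`. Since `P a` fixes the
uniform state, it fixes the QAOA state `ψ`, i.e. `ψ (a⁻¹ x) = ψ x` for all `x`.
-/

open scoped Matrix

lemma permMatrix_eq_permMatrixHom {X : Type*} [Fintype X] [DecidableEq X] (a : Equiv.Perm X) :
    permMatrix a = Matrix.permMatrixHom a := by
  ext x y
  simp only [permMatrix, Matrix.of_apply, Matrix.permMatrixHom_apply, PEquiv.toMatrix_apply,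
    Equiv.toPEquiv_apply, Option.mem_def, Option.some.injEq, Equiv.Perm.inv_def,
    Equiv.symm_apply_eq]

lemma permMatrix_mulVec {X : Type*} [Fintype X] [DecidableEq X] (a : Equiv.Perm X)
    (v : X → ℂ) : permMatrix a *ᵥ v = v ∘ a.symm := by
  rw [permMatrix_eq_permMatrixHom, Matrix.permMatrixHom_apply, Matrix.permMatrix_mulVec,
    Equiv.Perm.inv_def]

lemma MonoidHom.commute_of_mem_closure {G M : Type*} [Group G] [Monoid M] (φ : G →* M)
    {S : Set G} {m : M} (hS : ∀ g ∈ S, Commute (φ g) m) {g : G} (hg : g ∈ Subgroup.closure S) :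
    Commute (φ g) m := by
  induction hg using Subgroup.closure_induction with
  | mem g hg => exact hS g hg
  | one => rw [map_one]; exact Commute.one_left m
  | mul g h _ _ hg hh => rw [map_mul]; exact hg.mul_left hh
  | inv g _ hg =>
    have := (show Commute (φ.toHomUnits g : M) m from hg).units_inv_left
    rwa [← map_inv, MonoidHom.coe_toHomUnits] at this

lemma commute_permMatrix_of_mem_closure {X : Type*} [Fintype X] [DecidableEq X]
    {S : Set (Equiv.Perm X)} {M : Matrix X X ℂ} (hS : ∀ a ∈ S, Commute (permMatrix a) M)
    {a : Equiv.Perm X} (ha : a ∈ Subgroup.closure S) : Commute (permMatrix a) M := by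
  simp only [permMatrix_eq_permMatrixHom] at hS ⊢
  exact (Matrix.permMatrixHom (R := ℂ)).commute_of_mem_closure hS ha

lemma commute_qaoaLayers {X : Type*} [Fintype X] [DecidableEq X] {P B C : Matrix X X ℂ}
    (hB : Commute P B) (hC : Commute P C) {p : ℕ} (β γ : Fin p → ℝ) :
    Commute P (((List.finRange p).map fun j =>
      NormedSpace.exp ((-(β j : ℂ) * Complex.I) • B) *
        NormedSpace.exp ((-(γ j : ℂ) * Complex.I) • C)).reverse.prod) := by
  refine Commute.list_prod_right _ _ fun m hm => ?_
  obtain ⟨j, -, rfl⟩ := List.mem_map.mp (List.mem_reverse.mp hm)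
  exact (hB.smul_right _).exp_right.mul_right (hC.smul_right _).exp_right

lemma qaoaState_apply_perm {n : ℕ} {f : (Fin n → Bool) → ℝ} {a : Equiv.Perm (Fin n → Bool)}
    (hB : Commute (permMatrix a) (mixerB n)) (hC : Commute (permMatrix a) (objC n f))
    (p : ℕ) (β γ : Fin p → ℝ) (x : Fin n → Bool) :
    qaoaState n f p β γ (a x) = qaoaState n f p β γ x := by
  have hs : permMatrix a *ᵥ uniformState n = uniformState n := by
    rw [permMatrix_mulVec]; rfl
  have hψ : permMatrix a *ᵥ qaoaState n f p β γ = qaoaState n f p β γ := by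
    rw [qaoaState, Matrix.mulVec_mulVec, (commute_qaoaLayers hB hC β γ).eq,
      ← Matrix.mulVec_mulVec, hs]
  conv_lhs => rw [← hψ]
  rw [permMatrix_mulVec, Function.comp_apply, Equiv.symm_apply_apply]

/-- Theorem 1 (second case): if every generator `a ∈ S` has a permutation matrix
commuting with both `C` and `B`, then for every element `a` of the generated subgroup
`Subgroup.closure S`, every depth `p`, all parameters, and every bitstring `x`, the
QAOA measurement probabilities satisfy `Pr x = Pr (a x)`: probabilities are the same
across all bitstrings in each orbit of the generated symmetry group. -/
theorem qaoa_symmetry_closure (n : ℕ) (f : (Fin n → Bool) → ℝ)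
    (S : Set (Equiv.Perm (Fin n → Bool)))
    (hC : ∀ a ∈ S, permMatrix a * objC n f = objC n f * permMatrix a)
    (hB : ∀ a ∈ S, permMatrix a * mixerB n = mixerB n * permMatrix a) :
    ∀ a ∈ Subgroup.closure S, ∀ (p : ℕ) (β γ : Fin p → ℝ) (x : Fin n → Bool),
      ‖qaoaState n f p β γ x‖ ^ 2 = ‖qaoaState n f p β γ (a x)‖ ^ 2 := by
  intro a ha p β γ x
  rw [qaoaState_apply_perm (commute_permMatrix_of_mem_closure hB ha)
    (commute_permMatrix_of_mem_closure hC ha)]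
end

section
/- Let σ : Equiv.Perm (Fin n) be a variable permutation and f : X → ℝ an objective function with f (x ∘ σ) = f x for every x : X. Then for every depth p : ℕ, all parameters β γ : Fin p → ℝ, and every x : X, the QAOA measurement probabilities with objective Hamiltonian C := Matrix.diagonal (fun x => (f x : ℂ)) satisfy Pr(x) = Pr(x ∘ σ). -/
/-!
Relabelling the variables by `σ` permutes the computational basis. The mixer `B` is invariant
under every such relabelling, and the objective `C` is invariant because `f` is. Reindexing
matrices along a basis permutation is a continuous ring automorphism, so it commutes with `exp`
and fixes every QAOA layer and their product; since it also fixes the uniform state, the QAOA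
state itself satisfies `ψ (x ∘ σ) = ψ x`, not only its probabilities.
-/

open Matrix NormedSpace

section Submatrix

variable {m n α : Type*} [Fintype m] [DecidableEq m] [Fintype n] [DecidableEq n]

theorem Matrix.exp_submatrix_equiv [Ring α] [TopologicalSpace α] [IsTopologicalRing α]
    [T2Space α] [Algebra ℚ α] (A : Matrix m m α) (e : n ≃ m) :
    exp (A.submatrix e e) = (exp A).submatrix e e := by
  have submatrix_pow (k : ℕ) : A.submatrix e e ^ k = (A ^ k).submatrix e e :=
    (map_pow (reindexRingEquiv α e.symm) A k).symm
  simp_rw [exp_eq_tsum_rat, submatrix_pow]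
  exact (Function.LeftInverse.map_tsum (fun k : ℕ => (k.factorial⁻¹ : ℚ) • A ^ k)
    (g := reindexRingEquiv α e.symm) (continuous_id.matrix_submatrix _ _)
    (continuous_id.matrix_submatrix e.symm e.symm) fun M => by simp).symm

theorem Matrix.submatrix_list_prod_equiv_of_forall [Semiring α] (e : m ≃ m)
    (l : List (Matrix m m α)) (h : ∀ M ∈ l, M.submatrix e e = M) :
    l.prod.submatrix e e = l.prod := by
  induction l with
  | nil => exact submatrix_one_equiv e
  | cons M l ih =>
    simp only [List.forall_mem_cons] at h
    rw [List.prod_cons, ← submatrix_mul_equiv _ _ _ e, h.1, ih h.2]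

end Submatrix

section QAOA

variable {n : ℕ}

def relabelVars (τ : Equiv.Perm (Fin n)) : Equiv.Perm (Fin n → Bool) :=
  Equiv.arrowCongr τ.symm (Equiv.refl Bool)

theorem relabelVars_apply (τ : Equiv.Perm (Fin n)) (x : Fin n → Bool) :
    relabelVars τ x = x ∘ τ :=
  rfl

theorem mixerB_submatrix_relabelVars (τ : Equiv.Perm (Fin n)) :
    (mixerB n).submatrix (relabelVars τ) (relabelVars τ) = mixerB n := by
  ext x y
  have hcard : (Finset.univ.filter fun i => x (τ i) ≠ y (τ i)).card =
      (Finset.univ.filter fun i => x i ≠ y i).card :=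
    Finset.card_equiv τ (by simp)
  simp only [mixerB, submatrix_apply, of_apply, relabelVars_apply, Function.comp_apply, hcard]

theorem objC_submatrix_of_comp_eq (f : (Fin n → Bool) → ℝ) (e : Equiv.Perm (Fin n → Bool))
    (hf : f ∘ e = f) : (objC n f).submatrix e e = objC n f := by
  rw [objC, submatrix_diagonal_equiv]
  exact congrArg diagonal (funext fun x => congrArg _ (congrFun hf x))

theorem qaoaState_comp_of_submatrix_eq (f : (Fin n → Bool) → ℝ) {p : ℕ} (β γ : Fin p → ℝ)
    (e : Equiv.Perm (Fin n → Bool)) (hB : (mixerB n).submatrix e e = mixerB n)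
    (hC : (objC n f).submatrix e e = objC n f) :
    qaoaState n f p β γ ∘ e = qaoaState n f p β γ := by
  have exp_smul_invariant (c : ℂ) {A : Matrix (Fin n → Bool) (Fin n → Bool) ℂ}
      (hA : A.submatrix e e = A) : (exp (c • A)).submatrix e e = exp (c • A) := by
    rw [← exp_submatrix_equiv]
    exact congrArg exp (congrArg (c • ·) hA)
  set U := ((List.finRange p).map fun j =>
      exp ((-(β j : ℂ) * Complex.I) • mixerB n) *
        exp ((-(γ j : ℂ) * Complex.I) • objC n f)).reverse.prod
  have hU : U.submatrix e e = U := by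
    refine submatrix_list_prod_equiv_of_forall e _ fun M hM => ?_
    obtain ⟨j, -, rfl⟩ := List.mem_map.mp (List.mem_reverse.mp hM)
    rw [← submatrix_mul_equiv _ _ _ e, exp_smul_invariant _ hB, exp_smul_invariant _ hC]
  calc qaoaState n f p β γ ∘ e = U.submatrix e e *ᵥ uniformState n :=
        (submatrix_mulVec_equiv U (uniformState n) e e).symm
    -- the uniform state is invariant under every permutation of the basis
    _ = qaoaState n f p β γ := by rw [hU]; rfl

end QAOA

/-- Corollary 1: if a variable permutation `σ` leaves the objective `f` invariant
(`f (x ∘ σ) = f x` for every `x`), then for every depth `p`, all parameters, and every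
bitstring `x`, the QAOA measurement probabilities satisfy `Pr x = Pr (x ∘ σ)`. -/
theorem qaoa_variable_permutation_symmetry (n : ℕ) (σ : Equiv.Perm (Fin n))
    (f : (Fin n → Bool) → ℝ) (hf : ∀ x : Fin n → Bool, f (x ∘ σ) = f x) :
    ∀ (p : ℕ) (β γ : Fin p → ℝ) (x : Fin n → Bool),
      ‖qaoaState n f p β γ x‖ ^ 2 = ‖qaoaState n f p β γ (x ∘ σ)‖ ^ 2 := by
  intro p β γ x
  have hC := objC_submatrix_of_comp_eq f (relabelVars σ) (funext hf)
  have hψ := qaoaState_comp_of_submatrix_eq f β γ (relabelVars σ)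
    (mixerB_submatrix_relabelVars σ) hC
  exact congrArg (‖·‖ ^ 2) (congrFun hψ x).symm
end

section
/- Suppose the objective f : X → ℝ depends only on the Hamming weight: for all x y : X, w(x) = w(y) implies f x = f y. Then with C := Matrix.diagonal (fun x => (f x : ℂ)), for every depth p : ℕ, all parameters β γ : Fin p → ℝ, and all x y : X with w(x) = w(y), the QAOA measurement probabilities satisfy Pr(x) = Pr(y). -/
/-- The Hamming weight of a bitstring: the number of coordinates equal to `true`. -/
def hammingWeight {n : ℕ} (x : Fin n → Bool) : ℕ :=
  (Finset.univ.filter fun i => x i = true).card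

theorem Finset.card_filter_comp_equiv {ι κ : Type*} [Fintype ι] [Fintype κ] (e : ι ≃ κ)
    (p : κ → Prop) [DecidablePred p] :
    (Finset.univ.filter fun i => p (e i)).card = (Finset.univ.filter p).card := by
  rw [← Fintype.card_subtype, ← Fintype.card_subtype]
  exact Fintype.card_congr (e.subtypeEquiv fun _ => Iff.rfl)

theorem Equiv.Perm.exists_comp_eq_of_card_fiber_eq {ι β : Type*} [Fintype ι] [DecidableEq β]
    {x y : ι → β}
    (h : ∀ b, Fintype.card {i // y i = b} = Fintype.card {i // x i = b}) :
    ∃ σ : Equiv.Perm ι, x ∘ σ = y :=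
  ⟨Equiv.ofFiberEquiv fun b => Fintype.equivOfCardEq (h b),
    funext (Equiv.ofFiberEquiv_map _)⟩

namespace Matrix

section PermInvariant

variable {X : Type*} [Fintype X] [DecidableEq X]

def permInvariantSubalgebra (R A : Type*) [CommSemiring R] [Semiring A] [Algebra R A]
    (a : Equiv.Perm X) : Subalgebra R (Matrix X X A) :=
  AlgHom.equalizer (reindexAlgEquiv R A a.symm : Matrix X X A →ₐ[R] Matrix X X A)
    (AlgHom.id R _)

variable {R : Type*} [CommSemiring R] {a : Equiv.Perm X}

theorem mem_permInvariantSubalgebra {A : Type*} [Semiring A] [Algebra R A] {M : Matrix X X A} :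
    M ∈ permInvariantSubalgebra R A a ↔ M.submatrix a a = M :=
  Iff.rfl

theorem exp_mem_permInvariantSubalgebra {A : Type*} [Ring A] [Algebra R A] [TopologicalSpace A]
    [IsTopologicalRing A] [T2Space A] [Algebra ℚ R] [Algebra ℚ A] [IsScalarTower ℚ R A]
    {M : Matrix X X A}
    (hM : M ∈ permInvariantSubalgebra R A a) :
    NormedSpace.exp M ∈ permInvariantSubalgebra R A a :=
  NormedSpace.exp_mem (R := R) (isClosed_eq (continuous_id.matrix_submatrix _ _) continuous_id) hM

theorem mulVec_comp_eq_of_mem_permInvariantSubalgebra {A : Type*} [Semiring A] [Algebra R A]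
    {U : Matrix X X A}
    (hU : U ∈ permInvariantSubalgebra R A a) {v : X → A} (hv : v ∘ a = v) :
    (U *ᵥ v) ∘ a = U *ᵥ v := by
  conv_rhs => rw [← hv, ← mem_permInvariantSubalgebra.mp hU, submatrix_mulVec_equiv]
  simp [Function.comp_def]

theorem diagonal_mem_permInvariantSubalgebra {A : Type*} [Semiring A] [Algebra R A] {d : X → A}
    (hd : d ∘ a = d) : diagonal d ∈ permInvariantSubalgebra R A a := by
  rw [mem_permInvariantSubalgebra, submatrix_diagonal_equiv, hd]

end PermInvariant

end Matrix

open Matrix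

section Bitstrings

variable {n : ℕ}

theorem hammingWeight_comp_perm (x : Fin n → Bool) (σ : Equiv.Perm (Fin n)) :
    hammingWeight (x ∘ σ) = hammingWeight x :=
  Finset.card_filter_comp_equiv σ fun i => x i = true

theorem mixerB_comp_perm (x y : Fin n → Bool) (σ : Equiv.Perm (Fin n)) :
    mixerB n (x ∘ σ) (y ∘ σ) = mixerB n x y := by
  simp only [mixerB, Matrix.of_apply, Function.comp_apply,
    Finset.card_filter_comp_equiv σ fun i => x i ≠ y i]

theorem exists_perm_comp_eq_of_hammingWeight_eq {x y : Fin n → Bool}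
    (h : hammingWeight x = hammingWeight y) : ∃ σ : Equiv.Perm (Fin n), x ∘ σ = y := by
  have htrue : Fintype.card {i // y i = true} = Fintype.card {i // x i = true} := by
    rw [Fintype.card_subtype, Fintype.card_subtype]
    exact h.symm
  apply Equiv.Perm.exists_comp_eq_of_card_fiber_eq
  rintro (_ | _)
  · simp only [← Bool.not_eq_true, Fintype.card_subtype_compl, htrue]
  · exact htrue

theorem qaoaState_comp_perm {f : (Fin n → Bool) → ℝ} {σ : Equiv.Perm (Fin n)}
    (hf : ∀ x, f (x ∘ σ) = f x) (p : ℕ) (β γ : Fin p → ℝ) (x : Fin n → Bool) :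
    qaoaState n f p β γ (x ∘ σ) = qaoaState n f p β γ x := by
  -- `a z = z ∘ σ`
  let a : Equiv.Perm (Fin n → Bool) := σ.symm.arrowCongr (Equiv.refl Bool)
  have hB : mixerB n ∈ permInvariantSubalgebra ℂ ℂ a := by
    ext x y
    exact mixerB_comp_perm x y σ
  have hC : objC n f ∈ permInvariantSubalgebra ℂ ℂ a :=
    diagonal_mem_permInvariantSubalgebra (funext fun x => congrArg Complex.ofReal (hf x))
  unfold qaoaState
  refine congrFun (mulVec_comp_eq_of_mem_permInvariantSubalgebra (R := ℂ) (a := a) ?_ rfl) x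
  refine Subalgebra.list_prod_mem _ fun M hM => ?_
  obtain ⟨j, -, rfl⟩ := List.mem_map.mp (List.mem_reverse.mp hM)
  exact mul_mem (exp_mem_permInvariantSubalgebra (Subalgebra.smul_mem _ hB _))
    (exp_mem_permInvariantSubalgebra (Subalgebra.smul_mem _ hC _))

end Bitstrings

/-- If the objective `f` depends only on the Hamming weight, then QAOA measurement
probabilities coincide on bitstrings of equal Hamming weight: for every depth `p`,
all parameters, and all `x, y` with `w(x) = w(y)`, `Pr x = Pr y`. -/
theorem qaoa_hamming_symmetry (n : ℕ) (f : (Fin n → Bool) → ℝ)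
    (hf : ∀ x y : Fin n → Bool, hammingWeight x = hammingWeight y → f x = f y) :
    ∀ (p : ℕ) (β γ : Fin p → ℝ) (x y : Fin n → Bool),
      hammingWeight x = hammingWeight y →
        ‖qaoaState n f p β γ x‖ ^ 2 = ‖qaoaState n f p β γ y‖ ^ 2 := by
  intro p β γ x y hxy
  obtain ⟨σ, rfl⟩ := exists_perm_comp_eq_of_hammingWeight_eq hxy
  rw [qaoaState_comp_perm (fun z => hf _ _ (hammingWeight_comp_perm z σ))]
end
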